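/- arXiv:1307.0384 — 7 statements merged into one kernel-verified Lean document; each statement's English description precedes it below -/
import Mathlib

section
/- Let P(T) ∈ 𝒪_E[[T]] be a power series all of whose coefficients of P(T) − T^q lie in 𝔪_E (i.e. P reduces to T^q modulo 𝔪_E). Then there exists a ∈ 𝔪_E such that the convergent series P(a) = Σ_{n≥0} c_n a^n (where c_n are the coefficients of P) sums to a, and moreover ‖a‖ = ‖c_0‖, i.e. the absolute value of a equals that of the constant coefficient P(0). -/
/-! Since `P ≡ T^q` and `q ≥ 2` (the residue field of `E` is finite, as `𝒪_E` is compact and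
`𝔪_E` open, and nontrivial), `‖c₀‖ < 1` and `‖c₁‖ < 1`. By the ultrametric inequality,
`x ↦ P(x)` is then Lipschitz with constant `max ‖c₁‖ ‖c₀‖ < 1` on the ball of radius `‖c₀‖`
and maps it into itself, so Banach's theorem gives a fixed point `a`. Finally
`‖c₀ - a‖ = ‖P(0) - P(a)‖ ≤ ‖a‖`, hence `‖c₀‖ ≤ max ‖a‖ ‖c₀ - a‖ = ‖a‖ ≤ ‖c₀‖`. -/

open PowerSeries

/-- The ring of integers of an ultrametric normed field: elements of norm at most `1`. -/
noncomputable def ringOfIntegers (E : Type*) [NormedField E] [IsUltrametricDist E] :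
    Subring E where
  carrier := {x | ‖x‖ ≤ 1}
  mul_mem' := fun {a b} ha hb => by
    simpa [norm_mul] using mul_le_one₀ ha (norm_nonneg _) hb
  one_mem' := by simp
  add_mem' := fun {a b} ha hb =>
    le_trans (IsUltrametricDist.norm_add_le_max a b) (max_le ha hb)
  zero_mem' := by simp
  neg_mem' := fun {a} ha => by simpa using ha

/-- The maximal ideal of the ring of integers: elements of norm less than `1`. -/
noncomputable def maxIdeal (E : Type*) [NormedField E] [IsUltrametricDist E] :
    Ideal (ringOfIntegers E) where
  carrier := {x | ‖(x : E)‖ < 1}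
  add_mem' := fun {a b} ha hb =>
    lt_of_le_of_lt (IsUltrametricDist.norm_add_le_max (a : E) (b : E)) (max_lt ha hb)
  zero_mem' := by simp
  smul_mem' := fun c x hx => by
    have hc : ‖(c : E)‖ ≤ 1 := c.2
    calc ‖((c • x : ringOfIntegers E) : E)‖ = ‖(c : E)‖ * ‖(x : E)‖ := by
          simp [norm_mul]
      _ ≤ 1 * ‖(x : E)‖ := by gcongr
      _ < 1 := by simpa using hx

open Metric Set

section

variable {E : Type*} [NormedField E]

namespace PowerSeries

/-- `∑ cₙ xⁿ`, with the junk value `0` where the series does not converge. -/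
noncomputable def tsumEval (P : PowerSeries E) (x : E) : E :=
  ∑' n, coeff n P * x ^ n

@[simp]
lemma tsumEval_zero (P : PowerSeries E) : P.tsumEval 0 = coeff 0 P := by
  rw [tsumEval, tsum_eq_single 0 fun n hn => by simp [zero_pow hn]]
  simp

variable {P : PowerSeries E}

lemma summable_coeff_mul_pow [CompleteSpace E] (hP : ∀ n, ‖coeff n P‖ ≤ 1) {x : E}
    (hx : ‖x‖ < 1) : Summable fun n => coeff n P * x ^ n := by
  refine .of_norm_bounded (summable_geometric_of_lt_one (norm_nonneg x) hx) fun n => ?_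
  rw [norm_mul, norm_pow]
  exact mul_le_of_le_one_left (by positivity) (hP n)

lemma norm_coeff_succ_mul_pow_le (hP : ∀ n, ‖coeff n P‖ ≤ 1) {r : ℝ} (hr₀ : 0 ≤ r)
    (hr₁ : r ≤ 1) (m : ℕ) : ‖coeff (m + 1) P‖ * r ^ m ≤ max ‖coeff 1 P‖ r := by
  rcases m with _ | m
  · simp
  · calc ‖coeff (m + 2) P‖ * r ^ (m + 1) ≤ 1 * r := by
          gcongr
          · exact hP _
          · exact pow_le_of_le_one hr₀ hr₁ m.succ_ne_zero
      _ ≤ max ‖coeff 1 P‖ r := by simp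

end PowerSeries

variable [IsUltrametricDist E]

lemma norm_pow_succ_sub_pow_succ_le {r : ℝ} {x y : E} (hx : ‖x‖ ≤ r) (hy : ‖y‖ ≤ r) (n : ℕ) :
    ‖x ^ (n + 1) - y ^ (n + 1)‖ ≤ ‖x - y‖ * r ^ n := by
  have hr : 0 ≤ r := (norm_nonneg x).trans hx
  induction n with
  | zero => simp
  | succ n ih =>
    have hsplit : x ^ (n + 2) - y ^ (n + 2) =
        x * (x ^ (n + 1) - y ^ (n + 1)) + (x - y) * y ^ (n + 1) := by ring
    rw [hsplit]
    refine (IsUltrametricDist.norm_add_le_max _ _).trans (max_le ?_ ?_)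
    · calc ‖x * (x ^ (n + 1) - y ^ (n + 1))‖ ≤ r * (‖x - y‖ * r ^ n) := by
            rw [norm_mul]; exact mul_le_mul hx ih (norm_nonneg _) hr
        _ = ‖x - y‖ * r ^ (n + 1) := by ring
    · rw [norm_mul, norm_pow]
      gcongr

namespace PowerSeries

variable {P : PowerSeries E}

/-- Each term `cₙ xⁿ` with `n ≥ 2` is `r`-Lipschitz on the ball, as
`‖xⁿ - yⁿ‖ ≤ ‖x - y‖ rⁿ⁻¹`. -/
lemma norm_tsumEval_sub_le [CompleteSpace E] (hP : ∀ n, ‖coeff n P‖ ≤ 1) {r : ℝ} (hr : r < 1)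
    {x y : E} (hx : ‖x‖ ≤ r) (hy : ‖y‖ ≤ r) :
    ‖P.tsumEval x - P.tsumEval y‖ ≤ max ‖coeff 1 P‖ r * ‖x - y‖ := by
  have hr₀ : 0 ≤ r := (norm_nonneg x).trans hx
  rw [tsumEval, tsumEval, ← (summable_coeff_mul_pow hP (hx.trans_lt hr)).tsum_sub
    (summable_coeff_mul_pow hP (hy.trans_lt hr))]
  refine IsUltrametricDist.norm_tsum_le_of_forall_le_of_nonneg (by positivity) fun n => ?_
  rw [← mul_sub, norm_mul]
  rcases n with _ | m
  · simp only [pow_zero, sub_self, norm_zero, mul_zero]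
    positivity
  · calc ‖coeff (m + 1) P‖ * ‖x ^ (m + 1) - y ^ (m + 1)‖
        ≤ ‖coeff (m + 1) P‖ * (‖x - y‖ * r ^ m) := by
          gcongr; exact norm_pow_succ_sub_pow_succ_le hx hy m
      _ = ‖coeff (m + 1) P‖ * r ^ m * ‖x - y‖ := by ring
      _ ≤ max ‖coeff 1 P‖ r * ‖x - y‖ := by
          gcongr; exact norm_coeff_succ_mul_pow_le hP hr₀ hr.le m

lemma exists_tsumEval_eq_self [CompleteSpace E] (hP : ∀ n, ‖coeff n P‖ ≤ 1)
    (h₀ : ‖coeff 0 P‖ < 1) (h₁ : ‖coeff 1 P‖ < 1) :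
    ∃ a, ‖a‖ ≤ ‖coeff 0 P‖ ∧ P.tsumEval a = a := by
  set r := ‖coeff 0 P‖
  set k : NNReal := ⟨max ‖coeff 1 P‖ r, by positivity⟩
  have hk : k < 1 := by rw [← NNReal.coe_lt_coe]; exact max_lt h₁ h₀
  have hLip : ∀ x ∈ closedBall (0 : E) r, ∀ y ∈ closedBall (0 : E) r,
      dist (P.tsumEval x) (P.tsumEval y) ≤ k * dist x y := by
    intro x hx y hy
    rw [mem_closedBall_zero_iff] at hx hy
    rw [dist_eq_norm, dist_eq_norm]
    exact norm_tsumEval_sub_le hP h₀ hx hy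
  have hmaps : MapsTo P.tsumEval (closedBall 0 r) (closedBall 0 r) := by
    intro x hx
    have hsub := hLip x hx 0 (mem_closedBall_self (norm_nonneg _))
    rw [mem_closedBall_zero_iff] at hx ⊢
    rw [dist_zero_right, dist_eq_norm, tsumEval_zero] at hsub
    calc ‖P.tsumEval x‖ = ‖(P.tsumEval x - coeff 0 P) + coeff 0 P‖ := by rw [sub_add_cancel]
      _ ≤ max ‖P.tsumEval x - coeff 0 P‖ r := IsUltrametricDist.norm_add_le_max _ _
      _ ≤ r := max_le (hsub.trans (mul_le_of_le_one_left (norm_nonneg x) (max_le h₁.le h₀.le)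
        |>.trans hx)) le_rfl
  have hcontr : ContractingWith k (hmaps.restrict _ _ _) :=
    ⟨hk, (LipschitzOnWith.of_dist_le_mul hLip).mapsToRestrict hmaps⟩
  obtain ⟨a, ha, hfix, -⟩ := hcontr.exists_fixedPoint' isClosed_closedBall.isComplete hmaps
    (mem_closedBall_self (norm_nonneg _)) (edist_ne_top _ _)
  exact ⟨a, mem_closedBall_zero_iff.mp ha, hfix⟩

lemma norm_eq_norm_coeff_zero_of_tsumEval_eq_self [CompleteSpace E]
    (hP : ∀ n, ‖coeff n P‖ ≤ 1) (h₀ : ‖coeff 0 P‖ < 1) (h₁ : ‖coeff 1 P‖ < 1) {a : E}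
    (ha : ‖a‖ ≤ ‖coeff 0 P‖) (hfix : P.tsumEval a = a) : ‖a‖ = ‖coeff 0 P‖ := by
  refine ha.antisymm ?_
  have hLip := norm_tsumEval_sub_le hP h₀ (norm_zero.trans_le (norm_nonneg _)) ha
  rw [tsumEval_zero, hfix, zero_sub, norm_neg] at hLip
  calc ‖coeff 0 P‖ = ‖a + (coeff 0 P - a)‖ := by rw [add_sub_cancel]
    _ ≤ max ‖a‖ ‖coeff 0 P - a‖ := IsUltrametricDist.norm_add_le_max _ _
    _ ≤ ‖a‖ := max_le le_rfl <| hLip.trans <|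
      mul_le_of_le_one_left (norm_nonneg a) (max_le h₁.le h₀.le)

end PowerSeries

end

section ResidueField

variable (E : Type*) [NormedField E] [IsUltrametricDist E]

instance [ProperSpace E] : CompactSpace (ringOfIntegers E) :=
  isCompact_iff_compactSpace.mp <| by
    convert isCompact_closedBall (0 : E) 1
    exact Set.ext fun x => mem_closedBall_zero_iff.symm

lemma isOpen_maxIdeal : IsOpen (maxIdeal E : Set (ringOfIntegers E)) := by
  convert (isOpen_ball (x := (0 : E)) (ε := 1)).preimage continuous_subtype_val
  exact Set.ext fun x => mem_ball_zero_iff.symm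

instance [ProperSpace E] : Finite (ringOfIntegers E ⧸ maxIdeal E) :=
  AddSubgroup.quotient_finite_of_isOpen (maxIdeal E).toAddSubgroup (isOpen_maxIdeal E)

instance : Nontrivial (ringOfIntegers E ⧸ maxIdeal E) :=
  Ideal.Quotient.nontrivial_iff.mpr <| (Ideal.ne_top_iff_one _).mpr fun h =>
    (show ‖((1 : ringOfIntegers E) : E)‖ < 1 from h).ne (by simp)

lemma two_le_card_residueField [ProperSpace E] :
    2 ≤ Nat.card (ringOfIntegers E ⧸ maxIdeal E) :=
  Finite.one_lt_card

end ResidueField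

/-- If `E` is a finite extension of `ℚ_p` with residue field of cardinality
`q`, and `P(T) ∈ 𝒪_E[[T]]` reduces to `T^q` modulo the maximal ideal `𝔪_E`, then there is an
`a ∈ 𝔪_E` with `P(a) = a` and `‖a‖ = ‖P(0)‖`. -/
theorem exists_fixedPoint_of_reduction_eq_pow
    {p : ℕ} [Fact p.Prime] (E : Type*) [NormedField E] [IsUltrametricDist E]
    [NormedAlgebra ℚ_[p] E] [FiniteDimensional ℚ_[p] E]
    (q : ℕ) (hq : q = Nat.card ((ringOfIntegers E) ⧸ (maxIdeal E)))
    (P : PowerSeries E) (hPint : ∀ n, ‖coeff n P‖ ≤ 1)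
    (hPred : ∀ n, ‖coeff n (P - X ^ q)‖ < 1) :
    ∃ a : E, ‖a‖ < 1 ∧ HasSum (fun n => coeff n P * a ^ n) a ∧
      ‖a‖ = ‖coeff 0 P‖ := by
  have : ProperSpace E := FiniteDimensional.proper ℚ_[p] E
  have hq₂ : 2 ≤ q := hq ▸ two_le_card_residueField E
  have hcoeff : ∀ n, n ≠ q → ‖coeff n P‖ < 1 := fun n hn => by
    simpa [coeff_X_pow, hn] using hPred n
  have h₀ := hcoeff 0 (by omega)
  have h₁ := hcoeff 1 (by omega)
  obtain ⟨a, ha, hfix⟩ := exists_tsumEval_eq_self hPint h₀ h₁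
  have hnorm := norm_eq_norm_coeff_zero_of_tsumEval_eq_self hPint h₀ h₁ ha hfix
  refine ⟨a, hnorm ▸ h₀, ?_, hnorm⟩
  exact (summable_coeff_mul_pow hPint (hnorm ▸ h₀)).hasSum_iff.mpr hfix
end

section
/- Let R be an integral domain of characteristic zero. Let P(T) ∈ R[[T]] be a nonzero power series with zero constant term, and let F(T) ∈ R[[T]] be a power series with zero constant term whose coefficient of T equals 1 and with F ≠ T. If F(P(T)) = P(F(T)) (formal composition), then the coefficient of T in P is nonzero. -/
/-!
Suppose `coeff 1 P = 0`, so that `P` has order `m ≥ 2`, and write `F = X + G` where `G` has order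
`q ≥ 2`. Compare the coefficients of `T^(m+q-1)` on both sides of `F(P) = P(F)`. On the left,
`F(P) = P + G(P)` and `G(P)` has order at least `qm > m + q - 1`. On the right, writing
`F = X(1 + H)`, the congruence `(1 + H)^k ≡ 1 + kH` modulo `H^2` gives the first-order Taylor
expansion `P(F) ≡ P + X P' H = P + P' G` modulo `T^(m+2q-2)`, and the leading term of `P' G` is
`m P_m G_q T^(m+q-1)`. So `m P_m G_q = 0`, which is impossible in a domain of characteristic zero.
-/

open PowerSeries

/-- Formal substitution `f(g)` of a power series `g` with zero constant term into a power
series `f`: the coefficient of `T^n` in `f(g)` is `∑_{k ≤ n} f_k · (coefficient of `T^n` in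
`g^k`)`, which is the usual formal composition since `g^k` has order at least `k`. -/
noncomputable def PowerSeries.comp {R : Type*} [CommRing R] (f g : PowerSeries R) :
    PowerSeries R :=
  PowerSeries.mk fun n => ∑ k ∈ Finset.range (n + 1), coeff k f * coeff n (g ^ k)

open Finset

namespace PowerSeries

section CommSemiring

variable {R : Type*} [CommSemiring R]

theorem coeff_X_mul_derivative (f : R⟦X⟧) (n : ℕ) : coeff n (X * d⁄dX R f) = n * coeff n f := by
  cases n with
  | zero => simp
  | succ n => rw [coeff_succ_X_mul, coeff_derivative, mul_comm]; push_cast; ring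

theorem X_pow_dvd_X_mul_derivative {f : R⟦X⟧} {m : ℕ} (hf : X ^ m ∣ f) :
    X ^ m ∣ X * d⁄dX R f :=
  X_pow_dvd_iff.mpr fun i hi => by rw [coeff_X_mul_derivative, X_pow_dvd_iff.mp hf i hi, mul_zero]

theorem coeff_add_mul_of_X_pow_dvd {f g : R⟦X⟧} {a b : ℕ} (hf : X ^ a ∣ f) (hg : X ^ b ∣ g) :
    coeff (a + b) (f * g) = coeff a f * coeff b g := by
  obtain ⟨f, rfl⟩ := hf
  obtain ⟨g, rfl⟩ := hg
  rw [show X ^ a * f * (X ^ b * g) = X ^ (a + b) * (f * g) by ring]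
  simp only [coeff_X_pow_mul', le_refl, if_true, Nat.sub_self, coeff_zero_eq_constantCoeff_apply,
    map_mul]

theorem two_le_order_toNat {f : R⟦X⟧} (hf : f ≠ 0) (h0 : constantCoeff f = 0)
    (h1 : coeff 1 f = 0) : 2 ≤ f.order.toNat := by
  have hord := coeff_order hf
  by_contra! h
  obtain h | h : f.order.toNat = 0 ∨ f.order.toNat = 1 := by omega
  · rw [h, coeff_zero_eq_constantCoeff_apply] at hord
    exact hord h0
  · rw [h] at hord
    exact hord h1

end CommSemiring

variable {R : Type*} [CommRing R]

theorem add_comp (f g h : R⟦X⟧) : (f + g).comp h = f.comp h + g.comp h := by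
  ext n
  simp only [comp, coeff_mk, map_add, add_mul, sum_add_distrib]

theorem X_comp {g : R⟦X⟧} (hg : constantCoeff g = 0) : X.comp g = g := by
  ext n
  rw [comp, coeff_mk, sum_eq_single 1]
  · rw [coeff_one_X, one_mul, pow_one]
  · intro k _ hk
    rw [coeff_X, if_neg hk, zero_mul]
  · intro h1
    obtain rfl : n = 0 := by simpa using h1
    simp [hg]

theorem X_pow_mul_dvd_comp {f g : R⟦X⟧} {a b : ℕ} (hf : X ^ a ∣ f) (hg : X ^ b ∣ g) :
    X ^ (a * b) ∣ f.comp g := by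
  refine X_pow_dvd_iff.mpr fun n hn => ?_
  rw [comp, coeff_mk]
  refine sum_eq_zero fun k _ => ?_
  rcases lt_or_ge k a with hk | hk
  · rw [X_pow_dvd_iff.mp hf k hk, zero_mul]
  · have hgk : X ^ (b * k) ∣ g ^ k := pow_mul (X : R⟦X⟧) b k ▸ pow_dvd_pow_of_dvd hg k
    rw [X_pow_dvd_iff.mp hgk n (by nlinarith), mul_zero]

theorem coeff_X_mul_one_add_pow {H : R⟦X⟧} {a k n : ℕ} (hH : X ^ a ∣ H)
    (hn : n < k + 2 * a) :
    coeff n ((X * (1 + H)) ^ k) = coeff n (X ^ k) + (k : R) * coeff n (X ^ k * H) := by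
  have hsq : X ^ (k + 2 * a) ∣ X ^ k * ((1 + H) ^ k - 1 ^ (k - 1) * H * (k : R⟦X⟧) - 1 ^ k) := by
    rw [pow_add, pow_mul']
    exact mul_dvd_mul_left _ ((pow_dvd_pow_of_dvd hH 2).trans (sq_dvd_add_pow_sub_sub H 1 k))
  have hcoeff := X_pow_dvd_iff.mp hsq n hn
  have hk : coeff n (X ^ k * (H * (k : R⟦X⟧))) = (k : R) * coeff n (X ^ k * H) := by
    rw [← map_natCast (C (R := R)) k, ← mul_assoc, coeff_mul_C, mul_comm]
  rw [one_pow, one_pow, one_mul, mul_sub, mul_sub, map_sub, map_sub, hk, mul_one] at hcoeff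
  rw [mul_pow]
  linear_combination hcoeff

theorem coeff_comp_X_mul_one_add {P H : R⟦X⟧} {m a n : ℕ} (hP : X ^ m ∣ P) (hH : X ^ a ∣ H)
    (hn : n < m + 2 * a) :
    coeff n (P.comp (X * (1 + H))) = coeff n (P + X * d⁄dX R P * H) := by
  have hterm : ∀ k ∈ range (n + 1), coeff k P * coeff n ((X * (1 + H)) ^ k)
      = coeff k P * coeff n (X ^ k) + k * coeff k P * coeff (n - k) H := by
    intro k hk
    rcases lt_or_ge k m with hkm | hkm
    · simp [X_pow_dvd_iff.mp hP k hkm]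
    · rw [coeff_X_mul_one_add_pow hH (by omega), coeff_X_pow_mul',
        if_pos (Nat.lt_succ_iff.mp (mem_range.mp hk))]
      ring
  rw [comp, coeff_mk, sum_congr rfl hterm, sum_add_distrib, map_add, coeff_mul,
    Nat.sum_antidiagonal_eq_sum_range_succ (fun i j => coeff i (X * d⁄dX R P) * coeff j H)]
  congr 1
  · simp [coeff_X_pow]
  · simp only [coeff_X_mul_derivative]

end PowerSeries

/-- Let `R` be an integral domain of characteristic zero, `P ∈ R[[T]]`
nonzero with zero constant term, and `F ∈ R[[T]]` with zero constant term, coefficient of `T`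
equal to `1`, and `F ≠ T`. If `F(P(T)) = P(F(T))`, then the coefficient of `T` in `P` is
nonzero. -/
theorem coeff_one_ne_zero_of_commute_with_tangent_to_identity
    {R : Type*} [CommRing R] [IsDomain R] [CharZero R]
    (P F : PowerSeries R)
    (hP0 : constantCoeff P = 0) (hPne : P ≠ 0)
    (hF0 : constantCoeff F = 0) (hF1 : coeff 1 F = 1) (hFne : F ≠ X)
    (hcomm : F.comp P = P.comp F) :
    coeff 1 P ≠ 0 := by
  intro hP1
  set G := F - X with hG
  have hGne : G ≠ 0 := sub_ne_zero.mpr hFne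
  set m := P.order.toNat
  have hm : 2 ≤ m := two_le_order_toNat hPne hP0 hP1
  have hGord : 2 ≤ G.order.toNat := two_le_order_toNat hGne (by simp [G, hF0]) (by simp [G, hF1])
  obtain ⟨a, hqa⟩ : ∃ a, G.order.toNat = a + 1 := ⟨_, (Nat.succ_pred_eq_of_pos (by omega)).symm⟩
  obtain ⟨G₀, hG₀⟩ : X ^ (a + 1) ∣ G := hqa ▸ X_pow_order_dvd
  set H := X ^ a * G₀
  have hGH : G = X * H := by rw [hG₀, pow_succ', mul_assoc]
  have hF : F = X * (1 + H) := by rw [mul_one_add, ← hGH, hG, add_sub_cancel]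
  have hleft : coeff (m + a) (F.comp P) = coeff (m + a) P := by
    have hGP : X ^ ((a + 1) * m) ∣ G.comp P :=
      X_pow_mul_dvd_comp (hqa ▸ X_pow_order_dvd) X_pow_order_dvd
    have hmul : a + 1 + m ≤ (a + 1) * m := by nlinarith
    rw [← sub_add_cancel F X, add_comp, X_comp hP0, map_add, X_pow_dvd_iff.mp hGP _ (by omega),
      zero_add]
  have hright : coeff (m + a) (P.comp F) = coeff (m + a) P + m * coeff m P * coeff a H := by
    rw [hF, coeff_comp_X_mul_one_add X_pow_order_dvd (dvd_mul_right _ G₀) (by omega), map_add,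
      coeff_add_mul_of_X_pow_dvd (X_pow_dvd_X_mul_derivative X_pow_order_dvd) (dvd_mul_right _ G₀),
      coeff_X_mul_derivative]
  have hHa : coeff a H ≠ 0 := by
    rw [← coeff_succ_X_mul, ← hGH, ← hqa]
    exact coeff_order hGne
  have hkey : (m : R) * coeff m P * coeff a H = 0 := by
    have hcoeff := congrArg (coeff (m + a)) hcomm
    rw [hleft, hright] at hcoeff
    linear_combination -hcoeff
  exact mul_ne_zero (mul_ne_zero (Nat.cast_ne_zero.mpr (by omega)) (coeff_order hPne)) hHa hkey
end

section
/- Let R be an integral domain. Let P(T) ∈ R[[T]] be a nonzero power series with zero constant term, let k ≥ 1 be the order of P (the smallest index of a nonzero coefficient) and π_k its coefficient of T^k. Let F(T) ∈ R[[T]] have zero constant term and coefficient of T equal to c. If F(P(T)) = P(F(T)), then c·π_k = π_k·c^k, and hence c^k = c. -/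
open PowerSeries

/-!
Compare the coefficients of `T^k` on both sides of `F(P) = P(F)`. Since `P` has order `k`,
`P^j` has order at least `j k`, so in `F(P)` only `j = 1` contributes, giving `c π_k`; since
`F` has order at least `1`, in `P(F)` only `j = k` contributes, giving `π_k c^k`. Cancelling
`π_k ≠ 0` in the domain `R` yields `c^k = c`.
-/

namespace PowerSeries

variable {R : Type*} [CommRing R]

theorem coeff_pow_eq_zero_of_lt_mul {φ : R⟦X⟧} {k : ℕ} (hφ : ∀ i < k, coeff i φ = 0)
    {n j : ℕ} (hn : n < j * k) : coeff n (φ ^ j) = 0 := by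
  have hdvd : X ^ (j * k) ∣ φ ^ j := by
    rw [mul_comm, pow_mul]
    exact pow_dvd_pow_of_dvd (X_pow_dvd_iff.2 hφ) j
  exact X_pow_dvd_iff.1 hdvd n hn

theorem coeff_self_pow_of_constantCoeff_eq_zero {φ : R⟦X⟧} (hφ : constantCoeff φ = 0)
    (n : ℕ) : coeff n (φ ^ n) = coeff 1 φ ^ n := by
  obtain ⟨ψ, rfl⟩ := X_dvd_iff.2 hφ
  simpa [mul_pow, coeff_succ_X_mul] using coeff_X_pow_mul (ψ ^ n) n 0

theorem coeff_comp_eq_coeff_one_mul {f g : R⟦X⟧} {k : ℕ} (hk : 0 < k)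
    (hg : ∀ i < k, coeff i g = 0) : coeff k (f.comp g) = coeff 1 f * coeff k g := by
  rw [PowerSeries.comp, coeff_mk, Finset.sum_eq_single 1 _
    (fun h => absurd (Finset.mem_range.2 (by omega)) h), pow_one]
  intro j _ hj
  rcases Nat.lt_or_gt_of_ne hj with hj | hj
  · rw [Nat.lt_one_iff.1 hj, pow_zero, coeff_one, if_neg hk.ne', mul_zero]
  · rw [coeff_pow_eq_zero_of_lt_mul hg (by nlinarith), mul_zero]

theorem coeff_comp_eq_mul_coeff_one_pow {f g : R⟦X⟧} {k : ℕ} (hf : ∀ i < k, coeff i f = 0)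
    (hg : constantCoeff g = 0) : coeff k (f.comp g) = coeff k f * coeff 1 g ^ k := by
  rw [PowerSeries.comp, coeff_mk, Finset.sum_eq_single k _ (by simp),
    coeff_self_pow_of_constantCoeff_eq_zero hg]
  intro j hj hjk
  rw [hf j (by have := Finset.mem_range.1 hj; omega), zero_mul]

end PowerSeries

theorem coeff_one_pow_eq_coeff_one_of_commute_general
    {R : Type*} [CommRing R] [IsDomain R]
    (P F : PowerSeries R) (k : ℕ) (hk : 1 ≤ k)
    (horder : ∀ i < k, coeff i P = 0) (hπk : coeff k P ≠ 0)
    (hF0 : constantCoeff F = 0)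
    (hcomm : F.comp P = P.comp F) :
    coeff 1 F * coeff k P = coeff k P * (coeff 1 F) ^ k ∧
      (coeff 1 F) ^ k = coeff 1 F := by
  have hcoeff : coeff 1 F * coeff k P = coeff k P * coeff 1 F ^ k := by
    rw [← coeff_comp_eq_coeff_one_mul hk horder, hcomm,
      coeff_comp_eq_mul_coeff_one_pow horder hF0]
  exact ⟨hcoeff, mul_left_cancel₀ hπk (hcoeff.symm.trans (mul_comm _ _))⟩

/-- Let `R` be an integral domain, `P ∈ R[[T]]` nonzero with zero constant
term and order `k ≥ 1`, with coefficient `π_k` of `T^k`. If `F ∈ R[[T]]` has zero constant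
term and coefficient of `T` equal to `c`, and `F(P(T)) = P(F(T))`, then `c·π_k = π_k·c^k`,
and hence `c^k = c`. -/
theorem coeff_one_pow_eq_coeff_one_of_commute
    {R : Type*} [CommRing R] [IsDomain R]
    (P F : PowerSeries R) (k : ℕ) (hk : 1 ≤ k)
    (hP0 : constantCoeff P = 0)
    (horder : ∀ i < k, coeff i P = 0) (hπk : coeff k P ≠ 0)
    (hF0 : constantCoeff F = 0)
    (hcomm : F.comp P = P.comp F) :
    coeff 1 F * coeff k P = coeff k P * (coeff 1 F) ^ k ∧
      (coeff 1 F) ^ k = coeff 1 F :=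
  coeff_one_pow_eq_coeff_one_of_commute_general P F k hk horder hπk hF0 hcomm
end

section
/- Let P(T) ∈ 𝒪_E[[T]] be a power series with zero constant term whose reduction modulo 𝔪_E equals T^q (i.e. every coefficient of P(T) − T^q lies in 𝔪_E). Suppose there exists F(T) ∈ 𝒪_E[[T]] with zero constant term such that F(P(T)) = P(F(T)), the reduction of F modulo 𝔪_E is not equal to T, and the coefficient of T in F lies in 1 + 2p·𝒪_E. Then the coefficient of T in P is nonzero, i.e. P'(0) ≠ 0. -/
open PowerSeries

/-!
Suppose `P'(0) = 0` and let `d ≥ 2` be the order of `P`. Comparing the coefficients of `T^d` in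
`F(P(T)) = P(F(T))` gives `a^d = a` for `a = F'(0)`, so `a` is a root of unity. If `a ≠ 1`, some
power `b` of `a` has prime order `ℓ`, and `|b - 1| ≤ |a - 1| ≤ |2p|` gives `|b - 1|^(p-1) < |p|`.
Then the linear term `ℓ (b - 1)` strictly dominates all other terms of the binomial expansion
of `(1 + (b - 1))^ℓ - 1 = 0`, which is absurd; so `a = 1`.
If now `F ≡ T` modulo `T^(n+1)` with `n ≥ 1`, the coefficients of `T^(d+n)` give
`d P_d F_{n+1} = 0`. Hence `F = T`, contradicting the assumption on the reduction of `F`.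
-/

open Finset

namespace PowerSeries

variable {R : Type*} [CommRing R]

theorem coeff_comp (f g : R⟦X⟧) (n : ℕ) :
    coeff n (f.comp g) = ∑ k ∈ range (n + 1), coeff k f * coeff n (g ^ k) :=
  coeff_mk _ _

theorem coeff_pow_eq_zero_of_X_pow_dvd {g : R⟦X⟧} {e k n : ℕ} (hg : X ^ e ∣ g)
    (hn : n < e * k) : coeff n (g ^ k) = 0 :=
  X_pow_dvd_iff.mp (pow_mul (X : R⟦X⟧) e k ▸ pow_dvd_pow_of_dvd hg k) n hn

theorem coeff_comp_eq_coeff_one_mul_of_X_pow_dvd {f g : R⟦X⟧} {d K N : ℕ}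
    (hf0 : constantCoeff f = 0) (hf : ∀ k, 2 ≤ k → k ≤ K → coeff k f = 0) (hg : X ^ d ∣ g)
    (hN : N < d * (K + 1)) :
    coeff N (f.comp g) = coeff 1 f * coeff N g := by
  rw [coeff_comp, sum_eq_single 1]
  · rw [pow_one]
  · intro k _ hk1
    rcases Nat.lt_or_ge K k with hKk | hkK
    · rw [coeff_pow_eq_zero_of_X_pow_dvd hg (hN.trans_le (Nat.mul_le_mul_left d hKk)), mul_zero]
    · obtain rfl | hk := Nat.eq_zero_or_pos k
      · rw [coeff_zero_eq_constantCoeff_apply, hf0, zero_mul]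
      · rw [hf k (by omega) hkK, zero_mul]
  · intro h1
    obtain rfl : N = 0 := by simpa using h1
    have hd : 0 < d := Nat.pos_of_ne_zero (by rintro rfl; simp at hN)
    rw [pow_one, X_pow_dvd_iff.mp hg 0 hd, mul_zero]

theorem coeff_comp_X_mul (f U : R⟦X⟧) (n : ℕ) :
    coeff n (f.comp (X * U)) = ∑ i ∈ range (n + 1), coeff i f * coeff (n - i) (U ^ i) := by
  rw [coeff_comp]
  refine sum_congr rfl fun i hi => ?_
  rw [mul_pow, coeff_X_pow_mul', if_pos (Nat.lt_succ_iff.mp (mem_range.mp hi))]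

theorem coeff_comp_X_mul_of_X_pow_dvd {f : R⟦X⟧} {d : ℕ} (hf : X ^ d ∣ f) (U : R⟦X⟧) :
    coeff d (f.comp (X * U)) = coeff d f * constantCoeff U ^ d := by
  rw [coeff_comp_X_mul, sum_eq_single d]
  · rw [Nat.sub_self, coeff_zero_eq_constantCoeff_apply, map_pow]
  · intro i hi hid
    rw [X_pow_dvd_iff.mp hf i (by have := mem_range.mp hi; omega), zero_mul]
  · exact fun hd => absurd (self_mem_range_succ d) hd

theorem coeff_one_add_pow_of_lt {G : R⟦X⟧} {n j : ℕ} (hG : X ^ n ∣ G) (hj : j < 2 * n)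
    (i : ℕ) : coeff j ((1 + G) ^ i) = coeff j (1 : R⟦X⟧) + i * coeff j G := by
  obtain ⟨k, hk⟩ := Polynomial.powAddExpansion (1 : R⟦X⟧) G i
  have hG2 : X ^ (2 * n) ∣ k * G ^ 2 := by
    rw [mul_comm 2 n, pow_mul]
    exact dvd_mul_of_dvd_right (pow_dvd_pow_of_dvd hG 2) k
  rw [hk, map_add, map_add, X_pow_dvd_iff.mp hG2 j hj, add_zero, one_pow, one_pow, mul_one,
    ← map_natCast (C (R := R)), coeff_C_mul]

theorem coeff_comp_X_mul_one_add_s3 {f G : R⟦X⟧} {d n : ℕ} (hf : X ^ d ∣ f) (hG : X ^ n ∣ G)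
    (hn : 1 ≤ n) :
    coeff (d + n) (f.comp (X * (1 + G))) = coeff (d + n) f + d * coeff d f * coeff n G := by
  have hG' := X_pow_dvd_iff.mp hG
  rw [coeff_comp_X_mul, sum_eq_add (d + n) d (by omega)]
  · rw [coeff_one_add_pow_of_lt hG (by omega), coeff_one_add_pow_of_lt hG (by omega),
      Nat.sub_self, Nat.add_sub_cancel_left, hG' 0 hn]
    simp only [coeff_one, if_pos, if_neg (by omega : n ≠ 0)]
    ring
  · intro i hi ⟨hid, hidn⟩
    rw [mem_range] at hi
    rcases Nat.lt_or_ge i d with hlt | hge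
    · rw [X_pow_dvd_iff.mp hf i hlt, zero_mul]
    · rw [coeff_one_add_pow_of_lt hG (by omega), coeff_one, if_neg (by omega),
        hG' _ (by omega), mul_zero, add_zero, mul_zero]
  · exact fun h => absurd (self_mem_range_succ _) h
  · exact fun h => absurd (mem_range.mpr (by omega)) h

theorem coeff_one_pow_eq_self_of_comp_comm [NoZeroDivisors R] {P F : R⟦X⟧} {d : ℕ} (hd : 1 ≤ d)
    (hPd : X ^ d ∣ P) (hPd0 : coeff d P ≠ 0) (hF0 : constantCoeff F = 0)
    (hcomm : F.comp P = P.comp F) : coeff 1 F ^ d = coeff 1 F := by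
  have hleft := coeff_comp_eq_coeff_one_mul_of_X_pow_dvd (K := 1) (N := d) hF0
    (fun _ h2 h1 => by omega) hPd (by omega)
  obtain ⟨U, rfl⟩ := X_dvd_iff.mpr hF0
  rw [hcomm, coeff_comp_X_mul_of_X_pow_dvd hPd, coeff_succ_X_mul,
    coeff_zero_eq_constantCoeff_apply, mul_comm] at hleft
  rw [coeff_succ_X_mul, coeff_zero_eq_constantCoeff_apply]
  exact mul_right_cancel₀ hPd0 hleft

theorem coeff_eq_zero_of_comp_comm [NoZeroDivisors R] [CharZero R] {P G : R⟦X⟧} {d n : ℕ}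
    (hd : 2 ≤ d) (hPd : X ^ d ∣ P) (hPd0 : coeff d P ≠ 0) (hn : 1 ≤ n) (hG : X ^ n ∣ G)
    (hcomm : (X * (1 + G)).comp P = P.comp (X * (1 + G))) : coeff n G = 0 := by
  have hG' := X_pow_dvd_iff.mp hG
  have hcoeff : ∀ k, 2 ≤ k → k ≤ n → coeff k (X * (1 + G)) = 0 := by
    intro k hk2 hkn
    obtain ⟨j, rfl⟩ : ∃ j, k = j + 1 := ⟨k - 1, by omega⟩
    rw [coeff_succ_X_mul, map_add, coeff_one, if_neg (by omega), hG' j (by omega), add_zero]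
  have hleft :=
    coeff_comp_eq_coeff_one_mul_of_X_pow_dvd (N := d + n) (by simp) hcoeff hPd (by nlinarith)
  rw [hcomm, coeff_comp_X_mul_one_add_s3 hPd hG hn, coeff_succ_X_mul, map_add,
    coeff_zero_eq_constantCoeff_apply, hG' 0 hn, map_one, add_zero, one_mul] at hleft
  have : (d : R) * coeff d P * coeff n G = 0 := by linear_combination hleft
  simpa [hPd0, show d ≠ 0 by omega] using this

theorem eq_X_of_comp_comm [NoZeroDivisors R] [CharZero R] {P F : R⟦X⟧} {d : ℕ} (hd : 2 ≤ d)
    (hPd : X ^ d ∣ P) (hPd0 : coeff d P ≠ 0) (hF0 : constantCoeff F = 0) (hF1 : coeff 1 F = 1)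
    (hcomm : F.comp P = P.comp F) : F = X := by
  obtain ⟨U, rfl⟩ := X_dvd_iff.mpr hF0
  obtain ⟨G, rfl⟩ : ∃ G, U = 1 + G := ⟨U - 1, by ring⟩
  have hG : ∀ n, X ^ n ∣ G := by
    intro n
    induction n with
    | zero => exact pow_zero (X : R⟦X⟧) ▸ one_dvd G
    | succ n ih =>
      refine X_pow_dvd_iff.mpr fun m hm => ?_
      rcases Nat.lt_or_ge m n with hmn | hnm
      · exact X_pow_dvd_iff.mp ih m hmn
      obtain rfl : m = n := by omega
      rcases Nat.eq_zero_or_pos m with rfl | hm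
      · simpa using hF1
      · exact coeff_eq_zero_of_comp_comm hd hPd hPd0 hm ih hcomm
  have hG0 : G = 0 := ext fun n => by simpa using X_pow_dvd_iff.mp (hG (n + 1)) n n.lt_succ_self
  rw [hG0, add_zero, mul_one]

end PowerSeries

section Ultrametric

theorem IsUltrametricDist.norm_sum_lt_of_forall_lt {ι M : Type*} [SeminormedAddCommGroup M]
    [IsUltrametricDist M] {s : Finset ι} {f : ι → M} {C : ℝ} (hC : 0 < C)
    (hf : ∀ i ∈ s, ‖f i‖ < C) : ‖∑ i ∈ s, f i‖ < C := by
  rcases s.eq_empty_or_nonempty with rfl | hs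
  · simpa using hC
  · obtain ⟨i, hi, hle⟩ := exists_norm_finsetSum_le_of_nonempty hs f
    exact hle.trans_lt (hf i hi)

variable {E : Type*} [NormedField E] [IsUltrametricDist E]

theorem norm_natCast_le_of_dvd {m n : ℕ} (h : m ∣ n) : ‖(n : E)‖ ≤ ‖(m : E)‖ := by
  obtain ⟨c, rfl⟩ := h
  rw [Nat.cast_mul, norm_mul]
  exact mul_le_of_le_one_right (norm_nonneg _) (IsUltrametricDist.norm_natCast_le_one E c)

theorem norm_pow_sub_one_le {a : E} (ha : ‖a‖ ≤ 1) (n : ℕ) : ‖a ^ n - 1‖ ≤ ‖a - 1‖ := by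
  rw [← geom_sum_mul, norm_mul]
  refine mul_le_of_le_one_left (norm_nonneg _) ?_
  refine IsUltrametricDist.norm_sum_le_of_forall_le_of_nonneg zero_le_one fun i _ => ?_
  rw [norm_pow]
  exact pow_le_one₀ (norm_nonneg a) ha

end Ultrametric

section Padic

variable {p : ℕ} [Fact p.Prime] {E : Type*} [NormedField E] [NormedAlgebra ℚ_[p] E]

theorem norm_natCast_eq_padic (n : ℕ) : ‖(n : E)‖ = ‖(n : ℚ_[p])‖ := by
  rw [← map_natCast (algebraMap ℚ_[p] E), norm_algebraMap']

theorem norm_prime_pos : 0 < ‖(p : E)‖ := by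
  rw [norm_natCast_eq_padic (p := p), Padic.norm_p]
  exact inv_pos.mpr (Nat.cast_pos.mpr (Fact.out : p.Prime).pos)

theorem norm_prime_lt_one : ‖(p : E)‖ < 1 := by
  rw [norm_natCast_eq_padic (p := p), Padic.norm_natCast_lt_one_iff]

theorem norm_natCast_eq_one_of_coprime {n : ℕ} (h : p.Coprime n) : ‖(n : E)‖ = 1 := by
  rw [norm_natCast_eq_padic (p := p), Padic.norm_natCast_eq_one_iff.mpr h]

theorem norm_lt_one_of_pow_pred_lt {w : E} (hw : ‖w‖ ^ (p - 1) < ‖(p : E)‖) : ‖w‖ < 1 := by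
  by_contra! h
  exact (one_le_pow₀ h).not_gt (hw.trans norm_prime_lt_one)

variable [IsUltrametricDist E]

theorem norm_choose_mul_pow_lt {ℓ k : ℕ} (hℓ : ℓ.Prime) (hk : k + 2 ≤ ℓ) {w : E}
    (hw : ‖w‖ ^ (p - 1) < ‖(p : E)‖) :
    ‖(ℓ.choose (k + 2) : E) * w ^ (k + 1)‖ < ‖(ℓ : E)‖ := by
  rw [norm_mul, norm_pow]
  have hwk : ‖w‖ ^ (k + 1) < 1 :=
    pow_lt_one₀ (norm_nonneg w) (norm_lt_one_of_pow_pred_lt hw) (by omega)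
  by_cases hℓp : ℓ = p
  · subst hℓp
    rcases hk.lt_or_eq with hk | hk
    · calc _ ≤ ‖(ℓ : E)‖ * ‖w‖ ^ (k + 1) := by
            gcongr; exact norm_natCast_le_of_dvd (hℓ.dvd_choose_self (by omega) hk)
        _ < ‖(ℓ : E)‖ := mul_lt_of_lt_one_right norm_prime_pos hwk
    · rwa [hk, Nat.choose_self, Nat.cast_one, norm_one, one_mul, show k + 1 = ℓ - 1 by omega]
  · rw [norm_natCast_eq_one_of_coprime ((Nat.coprime_primes Fact.out hℓ).mpr (Ne.symm hℓp))]
    calc _ ≤ 1 * ‖w‖ ^ (k + 1) := by gcongr; exact IsUltrametricDist.norm_natCast_le_one E _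
      _ < 1 := by rwa [one_mul]

theorem eq_one_of_pow_prime_eq_one {ℓ : ℕ} (hℓ : ℓ.Prime) {b : E} (hb : b ^ ℓ = 1)
    (hbp : ‖b - 1‖ ^ (p - 1) < ‖(p : E)‖) : b = 1 := by
  obtain ⟨w, rfl⟩ : ∃ w, b = w + 1 := ⟨b - 1, by ring⟩
  rw [add_sub_cancel_right] at hbp
  obtain ⟨l, rfl⟩ : ∃ l, ℓ = l + 2 := ⟨ℓ - 2, by have := hℓ.two_le; omega⟩
  set S := ∑ k ∈ range (l + 1), ((l + 2).choose (k + 2) : E) * w ^ (k + 1)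
  have hexp : w * (((l + 2 : ℕ) : E) + S) = 0 := by
    have hbinom := add_pow w 1 (l + 2)
    rw [hb, sum_range_succ', sum_range_succ'] at hbinom
    have htail : ∑ k ∈ range (l + 1), w ^ (k + 1 + 1) * 1 ^ (l + 2 - (k + 1 + 1)) *
        ((l + 2).choose (k + 1 + 1) : E) = w * S := by
      rw [mul_sum]
      exact sum_congr rfl fun k _ => by rw [one_pow]; ring
    rw [htail] at hbinom
    simp only [zero_add, pow_zero, pow_one, one_pow, mul_one, Nat.choose_one_right,
      Nat.choose_zero_right, Nat.cast_one] at hbinom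
    linear_combination -hbinom
  have hS : ‖S‖ < ‖((l + 2 : ℕ) : E)‖ :=
    IsUltrametricDist.norm_sum_lt_of_forall_lt
      (by rw [norm_natCast_eq_padic (p := p)]; exact norm_pos_iff.mpr (by norm_cast))
      fun k hk => norm_choose_mul_pow_lt hℓ (by have := mem_range.mp hk; omega) hbp
  rcases mul_eq_zero.mp hexp with hw | hsum
  · rw [hw, zero_add]
  · rw [eq_neg_of_add_eq_zero_right hsum, norm_neg] at hS
    exact absurd hS (lt_irrefl _)

theorem eq_one_of_pow_eq_one {a : E} {n : ℕ} (hn : n ≠ 0) (ha : a ^ n = 1)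
    (hap : ‖a - 1‖ ^ (p - 1) < ‖(p : E)‖) : a = 1 := by
  have hord : orderOf a ≠ 0 :=
    (isOfFinOrder_iff_pow_eq_one.mpr ⟨n, Nat.pos_of_ne_zero hn, ha⟩).orderOf_pos.ne'
  by_contra ha1
  have hℓ : (orderOf a).minFac.Prime := Nat.minFac_prime (orderOf_eq_one_iff.not.mpr ha1)
  set b := a ^ (orderOf a / (orderOf a).minFac)
  have hb : orderOf b = (orderOf a).minFac := orderOf_pow_orderOf_div hord (Nat.minFac_dvd _)
  have hnorm : ‖a‖ ≤ 1 := by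
    simpa using (IsUltrametricDist.norm_add_one_le_max_norm_one (a - 1)).trans
      (max_le (norm_lt_one_of_pow_pred_lt hap).le le_rfl)
  have hbp : ‖b - 1‖ ^ (p - 1) < ‖(p : E)‖ :=
    (pow_le_pow_left₀ (norm_nonneg _) (norm_pow_sub_one_le hnorm _) _).trans_lt hap
  have hb1 : b = 1 := eq_one_of_pow_prime_eq_one hℓ (hb ▸ pow_orderOf_eq_one b) hbp
  exact hℓ.one_lt.ne' (hb ▸ orderOf_eq_one_iff.mpr hb1)

theorem norm_pow_pred_lt_of_le_norm_two_mul {w : E} (hw : ‖w‖ ≤ ‖(2 * p : E)‖) :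
    ‖w‖ ^ (p - 1) < ‖(p : E)‖ := by
  rw [norm_mul] at hw
  rcases (Fact.out : p.Prime).eq_two_or_odd with rfl | hodd
  · rw [Nat.cast_ofNat] at hw ⊢
    calc ‖w‖ ^ (2 - 1) = ‖w‖ := pow_one _
      _ ≤ ‖(2 : E)‖ * ‖(2 : E)‖ := hw
      _ < ‖(2 : E)‖ := by
          have h2 := norm_prime_lt_one (p := 2) (E := E)
          have h2' := norm_prime_pos (p := 2) (E := E)
          rw [Nat.cast_ofNat] at h2 h2'
          exact mul_lt_of_lt_one_left h2' h2
  · have hp3 : 3 ≤ p := (Fact.out : p.Prime).two_le.lt_of_ne fun h => by omega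
    have hwp : ‖w‖ ≤ ‖(p : E)‖ :=
      hw.trans (mul_le_of_le_one_left (norm_nonneg _) (by
        simpa using IsUltrametricDist.norm_natCast_le_one E 2))
    calc ‖w‖ ^ (p - 1) ≤ ‖(p : E)‖ ^ (p - 1) := pow_le_pow_left₀ (norm_nonneg w) hwp _
      _ < ‖(p : E)‖ := pow_lt_self_of_lt_one₀ norm_prime_pos norm_prime_lt_one (by omega)

end Padic
theorem coeff_one_ne_zero_of_commuting_series_general
    {p : ℕ} [Fact p.Prime] (E : Type*) [NormedField E] [IsUltrametricDist E]
    [NormedAlgebra ℚ_[p] E]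
    (q : ℕ)
    (P : PowerSeries E)
    (hP0 : constantCoeff P = 0)
    (hPred : ∀ n, ‖coeff n (P - X ^ q)‖ < 1)
    (F : PowerSeries E)
    (hF0 : constantCoeff F = 0)
    (hcomm : F.comp P = P.comp F)
    (hFred : ¬ ∀ n, ‖coeff n (F - X)‖ < 1)
    (hF1 : ∃ y : E, ‖y‖ ≤ 1 ∧ coeff 1 F = 1 + 2 * p * y) :
    coeff 1 P ≠ 0 := by
  intro hP1
  have : CharZero E := charZero_of_injective_algebraMap (algebraMap ℚ_[p] E).injective
  have hP : P ≠ 0 := by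
    rintro rfl
    simpa using hPred q
  set d := P.order.toNat
  have hPd0 : coeff d P ≠ 0 := coeff_order hP
  have hd : 2 ≤ d := by
    by_contra! h
    interval_cases hd : d
    · exact hPd0 (by rwa [coeff_zero_eq_constantCoeff_apply])
    · exact hPd0 hP1
  have hPd : X ^ d ∣ P := X_pow_order_dvd
  obtain ⟨y, hy, ha⟩ := hF1
  have hsmall : ‖coeff 1 F - 1‖ ^ (p - 1) < ‖(p : E)‖ := by
    refine norm_pow_pred_lt_of_le_norm_two_mul ?_
    rw [ha, add_sub_cancel_left, norm_mul (2 * (p : E))]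
    exact mul_le_of_le_one_right (norm_nonneg _) hy
  have ha0 : coeff 1 F ≠ 0 := fun h0 => by
    simpa [h0] using norm_lt_one_of_pow_pred_lt hsmall
  have hroot : coeff 1 F ^ (d - 1) = 1 := by
    have := coeff_one_pow_eq_self_of_comp_comm (by omega) hPd hPd0 hF0 hcomm
    rwa [← Nat.sub_add_cancel (by omega : 1 ≤ d), pow_succ, mul_eq_right₀ ha0] at this
  have ha1 := eq_one_of_pow_eq_one (by omega) hroot hsmall
  exact hFred fun n => by simp [eq_X_of_comp_comm hd hPd hPd0 hF0 ha1 hcomm]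

/-- Let `P ∈ 𝒪_E[[T]]` have zero constant term and reduction `T^q` modulo
`𝔪_E`. If there is an `F ∈ 𝒪_E[[T]]` with zero constant term such that `F(P(T)) = P(F(T))`,
the reduction of `F` modulo `𝔪_E` is not `T`, and the coefficient of `T` in `F` lies in
`1 + 2p·𝒪_E`, then `P'(0) ≠ 0`. -/
theorem coeff_one_ne_zero_of_commuting_series
    {p : ℕ} [Fact p.Prime] (E : Type*) [NormedField E] [IsUltrametricDist E]
    [NormedAlgebra ℚ_[p] E] [FiniteDimensional ℚ_[p] E]
    (q : ℕ) (hq : q = Nat.card ((ringOfIntegers E) ⧸ (maxIdeal E)))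
    (P : PowerSeries E) (hPint : ∀ n, ‖coeff n P‖ ≤ 1)
    (hP0 : constantCoeff P = 0)
    (hPred : ∀ n, ‖coeff n (P - X ^ q)‖ < 1)
    (F : PowerSeries E) (hFint : ∀ n, ‖coeff n F‖ ≤ 1)
    (hF0 : constantCoeff F = 0)
    (hcomm : F.comp P = P.comp F)
    (hFred : ¬ ∀ n, ‖coeff n (F - X)‖ < 1)
    (hF1 : ∃ y : E, ‖y‖ ≤ 1 ∧ coeff 1 F = 1 + 2 * p * y) :
    coeff 1 P ≠ 0 :=
  coeff_one_ne_zero_of_commuting_series_general E q P hP0 hPred F hF0 hcomm hFred hF1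
end

section
/- Let P(T) = Σ_{k≥1} π_k T^k ∈ 𝒪_E[[T]] be a power series with zero constant term such that π_1 ≠ 0 and π_1 ∈ 𝔪_E, and let A(T) ∈ E[[T]] be the unique power series with zero constant term, coefficient of T equal to 1, and A(P(T)) = π_1·A(T). Then for every F(T) ∈ E[[T]] with zero constant term satisfying F(P(T)) = P(F(T)), one has A(F(T)) = c·A(T), where c is the coefficient of T in F. -/
/-!
Put `π = coeff 1 P` and `c = coeff 1 F`. Because substitution is associative and `F` commutes
with `P`, the series `A ∘ F` satisfies the same functional equation `D ∘ P = π • D` as `A`,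
so `D = A ∘ F - c • A` solves it too and has no linear term. For a series `D` whose
coefficients below `n` vanish, the coefficient of `T^n` in `D ∘ P` is `π^n` times that of `D`;
since `0 < ‖π‖ < 1` gives `π^n ≠ π` for `n ≠ 1`, the coefficients of `D` vanish one degree
after another.
-/

open PowerSeries

namespace PowerSeries

variable {R : Type*} [CommRing R]

theorem coeff_X_mul_pow (h : R⟦X⟧) (k n : ℕ) :
    coeff n ((X * h) ^ k) = if k ≤ n then coeff (n - k) (h ^ k) else 0 := by
  rw [mul_pow, coeff_X_pow_mul']

theorem comp_eq_subst {g : R⟦X⟧} (hg : constantCoeff g = 0) (f : R⟦X⟧) :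
    f.comp g = f.subst g := by
  ext n
  rw [coeff_subst' (.of_constantCoeff_zero' hg), comp, coeff_mk,
    finsum_eq_sum_of_support_subset (s := Finset.range (n + 1))]
  · rfl
  · obtain ⟨h, rfl⟩ := X_dvd_iff.2 hg
    intro k hk
    simp only [Function.mem_support, coeff_X_mul_pow] at hk
    rw [Finset.coe_range, Set.mem_Iio]
    by_contra hkn
    exact hk (by rw [if_neg (by omega), smul_zero])

theorem coeff_subst_of_coeff_lt_eq_zero {g : R⟦X⟧} (hg : constantCoeff g = 0) {f : R⟦X⟧}
    {n : ℕ} (hf : ∀ k < n, coeff k f = 0) :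
    coeff n (f.subst g) = coeff n f * coeff 1 g ^ n := by
  rw [coeff_subst' (.of_constantCoeff_zero' hg), finsum_eq_single _ n]
  · obtain ⟨h, rfl⟩ := X_dvd_iff.2 hg
    simp [coeff_X_mul_pow, smul_eq_mul]
  · intro k hk
    rcases lt_or_gt_of_ne hk with hlt | hgt
    · rw [hf k hlt, zero_smul]
    · obtain ⟨h, rfl⟩ := X_dvd_iff.2 hg
      rw [coeff_X_mul_pow, if_neg (by omega), smul_zero]

theorem eq_zero_of_subst_eq_smul [NoZeroDivisors R] {g f : R⟦X⟧} (hg : constantCoeff g = 0)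
    (hpow : ∀ n ≠ 1, coeff 1 g ^ n ≠ coeff 1 g) (hf : f.subst g = coeff 1 g • f)
    (hf1 : coeff 1 f = 0) : f = 0 := by
  ext n
  induction n using Nat.strong_induction_on with
  | _ n ih =>
    rw [map_zero]
    obtain rfl | hn := eq_or_ne n 1
    · exact hf1
    have hcoeff : coeff n f * (coeff 1 g ^ n - coeff 1 g) = 0 := by
      rw [mul_sub, ← coeff_subst_of_coeff_lt_eq_zero hg fun k hk ↦ by simpa using ih k hk, hf,
        coeff_smul, smul_eq_mul, mul_comm, sub_self]
    exact (mul_eq_zero.1 hcoeff).resolve_right (sub_ne_zero.2 (hpow n hn))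

end PowerSeries

theorem pow_ne_self_of_norm_lt_one {K : Type*} [NormedDivisionRing K] {a : K} (ha : a ≠ 0)
    (ha1 : ‖a‖ < 1) {n : ℕ} (hn : n ≠ 1) : a ^ n ≠ a := fun h ↦
  hn <| pow_right_injective₀ (norm_pos_iff.2 ha) ha1.ne <| by
    simpa only [pow_one, norm_pow] using congrArg norm h

theorem logarithm_linearizes_commuting_series_general
    (E : Type*) [NormedField E]
    (P : PowerSeries E)
    (hP0 : constantCoeff P = 0)
    (hπ1 : coeff 1 P ≠ 0) (hπ1m : ‖coeff 1 P‖ < 1)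
    (A : PowerSeries E) (hA0 : constantCoeff A = 0) (hA1 : coeff 1 A = 1)
    (hAP : A.comp P = C (coeff 1 P) * A)
    (F : PowerSeries E) (hF0 : constantCoeff F = 0)
    (hcomm : F.comp P = P.comp F) :
    A.comp F = C (coeff 1 F) * A := by
  have hP : HasSubst P := .of_constantCoeff_zero' hP0
  have hF : HasSubst F := .of_constantCoeff_zero' hF0
  rw [comp_eq_subst hP0, ← smul_eq_C_mul] at hAP
  rw [comp_eq_subst hP0, comp_eq_subst hF0] at hcomm
  rw [comp_eq_subst hF0, ← smul_eq_C_mul, ← sub_eq_zero]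
  have hAF : PowerSeries.subst P (A.subst F) = coeff 1 P • A.subst F := by
    rw [subst_comp_subst_apply hF hP, hcomm, ← subst_comp_subst_apply hP hF, hAP,
      subst_smul hF]
  have hAF1 : coeff 1 (A.subst F) = coeff 1 F := by
    rw [coeff_subst_of_coeff_lt_eq_zero hF0 fun k hk ↦ by simpa [Nat.lt_one_iff.1 hk] using hA0,
      hA1, one_mul, pow_one]
  refine eq_zero_of_subst_eq_smul hP0 (fun n hn ↦ pow_ne_self_of_norm_lt_one hπ1 hπ1m hn) ?_ ?_
  · rw [subst_sub hP, subst_smul hP, hAF, hAP, smul_sub, smul_comm]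
  · rw [map_sub, coeff_smul, hAF1, hA1, smul_eq_mul, mul_one, sub_self]

/-- Let `P = Σ_{k≥1} π_k T^k ∈ 𝒪_E[[T]]` with `π₁ ≠ 0`, `π₁ ∈ 𝔪_E`, and
let `A ∈ E[[T]]` be the unique power series with zero constant term, coefficient of `T` equal
to `1`, and `A(P(T)) = π₁·A(T)`. Then every `F ∈ E[[T]]` with zero constant term satisfying
`F(P(T)) = P(F(T))` satisfies `A(F(T)) = c·A(T)` where `c` is the coefficient of `T` in `F`. -/
theorem logarithm_linearizes_commuting_series
    {p : ℕ} [Fact p.Prime] (E : Type*) [NormedField E] [IsUltrametricDist E]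
    [NormedAlgebra ℚ_[p] E] [FiniteDimensional ℚ_[p] E]
    (P : PowerSeries E) (hPint : ∀ n, ‖coeff n P‖ ≤ 1)
    (hP0 : constantCoeff P = 0)
    (hπ1 : coeff 1 P ≠ 0) (hπ1m : ‖coeff 1 P‖ < 1)
    (A : PowerSeries E) (hA0 : constantCoeff A = 0) (hA1 : coeff 1 A = 1)
    (hAP : A.comp P = C (coeff 1 P) * A)
    (F : PowerSeries E) (hF0 : constantCoeff F = 0)
    (hcomm : F.comp P = P.comp F) :
    A.comp F = C (coeff 1 F) * A :=
  logarithm_linearizes_commuting_series_general E P hP0 hπ1 hπ1m A hA0 hA1 hAP F hF0 hcomm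
end

section
/- Let K be a Galois extension of ℚ_p of prime degree d, let a : Gal(K/ℚ_p) → ℕ be a function with values in the nonnegative integers, and let f : K → K be the ℚ_p-linear map defined by f(x) = Σ_{h ∈ Gal(K/ℚ_p)} a_h · h(x). Then the range of f is either {0}, or the one-dimensional ℚ_p-subspace of K spanned by 1 (i.e. the image of ℚ_p in K), or all of K. -/
/-!
The Galois group is cyclic of prime order `d`, generated by some `σ`, and the weighted sum is
`Q(σ)` for `Q = ∑_{i<d} a(σ^i) X^i ∈ ℚ[X]`. If the weights are constant, the map is a
nonzero multiple of the trace, whose image is the base field. Otherwise `Q` is prime to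
`X^d - 1 = (X - 1) Φ_d`: `Q(1) = ∑ a_h > 0`, and the irreducible `Φ_d` of degree `d - 1` can
only divide `Q` (of degree `< d`) if `Q` is a constant multiple of `Φ_d = 1 + X + ⋯ + X^(d-1)`,
i.e. if the weights are constant. Since `σ^d = 1`, `Q(σ)` is then invertible.
-/

open Polynomial Finset

namespace Polynomial

theorem coeff_eq_coeff_of_cyclotomic_prime_dvd {R : Type*} [CommRing R] [IsDomain R]
    {d : ℕ} [Fact d.Prime] {Q : R[X]} (hQ : Q.natDegree < d) (hdvd : cyclotomic d R ∣ Q)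
    {i j : ℕ} (hi : i < d) (hj : j < d) : Q.coeff i = Q.coeff j := by
  obtain ⟨q, rfl⟩ := hdvd
  rcases eq_or_ne q 0 with rfl | hq
  · simp
  have hq0 : q.natDegree = 0 := by
    rw [natDegree_mul (cyclotomic_ne_zero d R) hq, natDegree_cyclotomic,
      Nat.totient_prime Fact.out] at hQ
    omega
  rw [eq_C_of_natDegree_eq_zero hq0, cyclotomic_prime]
  simp [coeff_X_pow, hi, hj]

theorem isCoprime_X_pow_sub_one_of_prime {d : ℕ} [Fact d.Prime] {Q : ℚ[X]}
    (h1 : Q.eval 1 ≠ 0) (hΦ : ¬ cyclotomic d ℚ ∣ Q) : IsCoprime Q (X ^ d - 1) := by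
  rw [← cyclotomic_prime_mul_X_sub_one]
  refine IsCoprime.mul_right ?_ ?_
  · exact ((cyclotomic.irreducible_rat (Fact.out : d.Prime).pos).coprime_iff_not_dvd.2 hΦ).symm
  · rw [← C_1]
    refine ((irreducible_X_sub_C 1).coprime_iff_not_dvd.2 ?_).symm
    rwa [dvd_iff_isRoot]

end Polynomial

theorem LinearMap.surjective_aeval_of_isCoprime {R M : Type*} [CommRing R] [AddCommGroup M]
    [Module R M] (f : Module.End R M) {p q : R[X]} (hpq : IsCoprime p q) (hq : aeval f q = 0) :
    Function.Surjective (aeval f p) := by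
  have := sup_aeval_range_eq_top_of_isCoprime f hpq
  rwa [hq, LinearMap.range_zero, sup_bot_eq, LinearMap.range_eq_top] at this

section WeightPolynomial

variable {G : Type*} [Group G] (σ : G) (a : G → ℕ)

-- Taken over `ℚ`, where `Φ_d` is irreducible; over the base field it need not be.
noncomputable def weightPolynomial : ℚ[X] :=
  ∑ i ∈ range (orderOf σ), C (a (σ ^ i) : ℚ) * X ^ i

theorem coeff_weightPolynomial {i : ℕ} (hi : i < orderOf σ) :
    (weightPolynomial σ a).coeff i = a (σ ^ i) := by
  simp [weightPolynomial, finsetSum_coeff, coeff_X_pow, hi]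

theorem natDegree_weightPolynomial_lt (h : 0 < orderOf σ) :
    (weightPolynomial σ a).natDegree < orderOf σ := by
  refine (natDegree_sum_le_of_forall_le _ _ fun i hi => ?_).trans_lt (Nat.sub_one_lt h.ne')
  exact (natDegree_C_mul_X_pow_le _ _).trans (by simp at hi; omega)

variable [Fintype G] {σ}

theorem exists_lt_orderOf_pow_eq (hσ : ∀ g, g ∈ Subgroup.zpowers σ) (g : G) :
    ∃ i < orderOf σ, σ ^ i = g := by
  classical
  have hg := mem_univ g
  rw [← IsCyclic.image_range_orderOf hσ] at hg
  simpa using hg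

theorem sum_range_orderOf_eq_sum {M : Type*} [AddCommMonoid M]
    (hσ : ∀ g, g ∈ Subgroup.zpowers σ) (f : G → M) :
    ∑ i ∈ range (orderOf σ), f (σ ^ i) = ∑ g, f g := by
  classical
  rw [← IsCyclic.image_range_orderOf hσ, sum_image]
  exact fun i hi j hj => pow_injOn_Iio_orderOf (by simpa using hi) (by simpa using hj)

theorem eval_one_weightPolynomial (hσ : ∀ g, g ∈ Subgroup.zpowers σ) :
    (weightPolynomial σ a).eval 1 = ∑ g, (a g : ℚ) := by
  simp [weightPolynomial, eval_finsetSum, sum_range_orderOf_eq_sum hσ (fun g => (a g : ℚ))]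

theorem aeval_map_weightPolynomial (hσ : ∀ g, g ∈ Subgroup.zpowers σ) {F A : Type*} [Field F]
    [CharZero F] [Ring A] [Algebra F A] (ρ : G →* A) :
    aeval (ρ σ) ((weightPolynomial σ a).map (algebraMap ℚ F)) = ∑ g, a g • ρ g := by
  rw [← sum_range_orderOf_eq_sum hσ]
  simp [weightPolynomial, Polynomial.map_sum, map_pow, Algebra.smul_def]

theorem isCoprime_weightPolynomial (hσ : ∀ g, g ∈ Subgroup.zpowers σ)
    (hd : (orderOf σ).Prime) (ha : ∃ g h, a g ≠ a h) :
    IsCoprime (weightPolynomial σ a) (X ^ orderOf σ - 1) := by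
  have : Fact (orderOf σ).Prime := ⟨hd⟩
  obtain ⟨g, h, hgh⟩ := ha
  refine isCoprime_X_pow_sub_one_of_prime ?_ fun hdvd => hgh ?_
  · rw [eval_one_weightPolynomial a hσ, ← Nat.cast_sum, Nat.cast_ne_zero]
    intro hsum
    rw [sum_eq_zero_iff] at hsum
    exact hgh ((hsum g (mem_univ g)).trans (hsum h (mem_univ h)).symm)
  · obtain ⟨i, hi, rfl⟩ := exists_lt_orderOf_pow_eq hσ g
    obtain ⟨j, hj, rfl⟩ := exists_lt_orderOf_pow_eq hσ h
    have := coeff_eq_coeff_of_cyclotomic_prime_dvd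
      (natDegree_weightPolynomial_lt σ a hd.pos) hdvd hi hj
    rwa [coeff_weightPolynomial σ a hi, coeff_weightPolynomial σ a hj, Nat.cast_inj] at this

end WeightPolynomial

section WeightedGaloisSum

variable {F K : Type*} [Field F] [Field K] [Algebra F K] [FiniteDimensional F K]

noncomputable def weightedGaloisSum (a : (K ≃ₐ[F] K) → ℕ) : K →ₗ[F] K :=
  ∑ h, a h • h.toLinearMap

theorem weightedGaloisSum_apply (a : (K ≃ₐ[F] K) → ℕ) (x : K) :
    weightedGaloisSum a x = ∑ h, a h • h x := by
  simp [weightedGaloisSum]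

variable [CharZero F] [IsGalois F K]

theorem range_weightedGaloisSum_const {n : ℕ} (hn : n ≠ 0) :
    Set.range (weightedGaloisSum (F := F) (K := K) fun _ => n) = Set.range (algebraMap F K) := by
  have htrace : ∀ x, weightedGaloisSum (F := F) (fun _ => n) x =
      algebraMap F K (n * Algebra.trace F K x) := by
    intro x
    rw [weightedGaloisSum_apply, ← smul_sum, map_mul, trace_eq_sum_automorphisms, map_natCast,
      nsmul_eq_mul]
  ext y
  constructor
  · rintro ⟨x, rfl⟩
    exact ⟨_, (htrace x).symm⟩
  · rintro ⟨q, rfl⟩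
    obtain ⟨x, hx⟩ := Algebra.trace_surjective F K ((n : F)⁻¹ * q)
    refine ⟨x, ?_⟩
    rw [htrace, hx, mul_inv_cancel_left₀ (Nat.cast_ne_zero.2 hn)]

theorem surjective_weightedGaloisSum (hd : (Module.finrank F K).Prime)
    {a : (K ≃ₐ[F] K) → ℕ} (ha : ∃ g h, a g ≠ a h) :
    Function.Surjective (weightedGaloisSum a) := by
  have hcard : Nat.card (K ≃ₐ[F] K) = Module.finrank F K := IsGalois.card_aut_eq_finrank F K
  have : Fact (Module.finrank F K).Prime := ⟨hd⟩
  have : IsCyclic (K ≃ₐ[F] K) := isCyclic_of_prime_card hcard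
  obtain ⟨σ, hσ⟩ := IsCyclic.exists_generator (α := K ≃ₐ[F] K)
  have hord : orderOf σ = Module.finrank F K :=
    (orderOf_eq_card_of_forall_mem_zpowers hσ).trans hcard
  have hQ := (isCoprime_map (algebraMap ℚ F)).2
    (isCoprime_weightPolynomial a hσ (hord ▸ hd) ha)
  rw [Polynomial.map_sub, Polynomial.map_pow, map_X, Polynomial.map_one] at hQ
  have hσ_pow : aeval σ.toLinearMap (X ^ orderOf σ - 1 : F[X]) = 0 := by
    simp [← AlgEquiv.pow_toLinearMap, pow_orderOf_eq_one]
  have hsum : weightedGaloisSum a =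
      aeval σ.toLinearMap ((weightPolynomial σ a).map (algebraMap ℚ F)) :=
    (aeval_map_weightPolynomial a hσ (AlgEquiv.toLinearMapHom F K)).symm
  rw [hsum]
  exact LinearMap.surjective_aeval_of_isCoprime _ hQ hσ_pow

end WeightedGaloisSum

/-- Let `K` be a Galois extension of `ℚ_p` of prime degree `d`, let
`a : Gal(K/ℚ_p) → ℕ`, and let `f : K → K` be `f(x) = Σ_h a_h · h(x)`. Then the range of `f`
is `{0}`, the image of `ℚ_p` in `K`, or all of `K`. -/
theorem range_of_weighted_galois_sum
    {p : ℕ} [Fact p.Prime] (K : Type*) [Field K] [Algebra ℚ_[p] K]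
    [FiniteDimensional ℚ_[p] K] [IsGalois ℚ_[p] K]
    (d : ℕ) (hd : d.Prime) (hdeg : Module.finrank ℚ_[p] K = d)
    (a : (K ≃ₐ[ℚ_[p]] K) → ℕ) :
    Set.range (fun x : K => ∑ h : K ≃ₐ[ℚ_[p]] K, a h • h x) = {0} ∨
      Set.range (fun x : K => ∑ h : K ≃ₐ[ℚ_[p]] K, a h • h x) =
        Set.range (algebraMap ℚ_[p] K) ∨
      Set.range (fun x : K => ∑ h : K ≃ₐ[ℚ_[p]] K, a h • h x) = Set.univ := by
  have hf : (fun x : K => ∑ h : K ≃ₐ[ℚ_[p]] K, a h • h x) = weightedGaloisSum a :=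
    funext fun x => (weightedGaloisSum_apply a x).symm
  rw [hf]
  by_cases ha : ∃ g h, a g ≠ a h
  · exact .inr <| .inr <| Set.range_eq_univ.2 <| surjective_weightedGaloisSum (hdeg ▸ hd) ha
  push Not at ha
  obtain ⟨n, rfl⟩ : ∃ n, a = fun _ => n := ⟨a 1, funext fun h => ha h 1⟩
  rcases eq_or_ne n 0 with rfl | hn
  · left
    simp [weightedGaloisSum]
  · exact .inr <| .inl <| range_weightedGaloisSum_const hn
end

section
/- Let E be a separably closed field of characteristic p containing the finite field 𝔽_q with q = p^f elements. Let M be a finite-dimensional E-vector space and let φ : M → M be an additive map satisfying φ(a·m) = a^q·φ(m) for all a ∈ E and m ∈ M, and suppose that the E-linear span of the image of φ is all of M. Then: (i) M admits an E-basis consisting of vectors m with φ(m) = m (equivalently, the natural map E ⊗_{𝔽_q} M^{φ=1} → M is an isomorphism, where M^{φ=1} = {m ∈ M : φ(m) = m}); and (ii) the map m ↦ m − φ(m) from M to M is surjective. -/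
/-!
Let `q = p ^ f`. The equations `c - c ^ q = a` are separable, hence solvable in `E`; solving them
coordinatewise shows that `1 - φ` maps the span `N` of the fixed vectors onto itself. If `N ≠ M`,
the map induced on `M ⧸ N` still has spanning image, so it has a nonzero fixed class `x̄`; then
`φ x - x ∈ N` equals `z - φ z` for some `z ∈ N`, so `x + z` is fixed and `x ∈ N`, i.e. `x̄ = 0`.

A nonzero fixed vector exists whenever `M ≠ 0`: take `v ≠ 0` and `k` maximal with
`v, φ v, …, φ^(k-1) v` independent, so that `φ^k v = ∑ cᵢ φ^i v`. A fixed vector `∑ aᵢ φ^i v` is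
determined by `t = a_(k-1)`, subject to one equation `B_k(t) = t` (`frobeniusRecursion`). As
`B_k' = 0`, `B_k - X` is separable, and it has degree `q ^ k ≥ 2` because `c₀ ≠ 0` (`φ` preserves
linear independence), so it has a root `t ≠ 0`.
-/

open Polynomial Module Submodule Finset Function

theorem IsSepClosed.exists_root_ne {K : Type*} [Field K] [IsSepClosed K] {P : K[X]}
    (hP : P.Separable) (hdeg : 2 ≤ P.natDegree) (b : K) : ∃ t ≠ b, P.IsRoot t := by
  classical
  have hcard : 1 < P.roots.toFinset.card := by
    rw [Multiset.toFinset_card_of_nodup (nodup_roots hP),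
      ← (IsSepClosed.splits_of_separable P hP).natDegree_eq_card_roots]
    omega
  obtain ⟨t, ht, htb⟩ := (Finset.one_lt_card_iff_nontrivial.1 hcard).exists_ne b
  exact ⟨t, htb, (mem_roots hP.ne_zero).1 (Multiset.mem_toFinset.1 ht)⟩

namespace Polynomial

variable {K : Type*} [Field K]

/-- If `φ` is `q`-semilinear and `φ^k v = ∑_{i<k} cᵢ φ^i v`, then `∑_{i<k} Bᵢ₊₁(t) φ^i v` is
`φ`-fixed whenever `B_k(t) = t` (`FrobeniusSemilinear.apply_sum_frobeniusRecursion`). -/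
noncomputable def frobeniusRecursion (q : ℕ) (c : ℕ → K) : ℕ → K[X]
  | 0 => 0
  | i + 1 => frobeniusRecursion q c i ^ q + C (c i) * X ^ q

variable {q : ℕ} {c : ℕ → K}

@[simp]
theorem frobeniusRecursion_zero : frobeniusRecursion q c 0 = 0 := rfl

@[simp]
theorem frobeniusRecursion_succ (i : ℕ) :
    frobeniusRecursion q c (i + 1) = frobeniusRecursion q c i ^ q + C (c i) * X ^ q := rfl

theorem derivative_frobeniusRecursion (hq : (q : K) = 0) (i : ℕ) :
    derivative (frobeniusRecursion q c i) = 0 := by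
  induction i with
  | zero => simp
  | succ i ih => simp [derivative_pow, hq, ih]

theorem natDegree_frobeniusRecursion (hq : 1 < q) (hc : c 0 ≠ 0) (i : ℕ) :
    (frobeniusRecursion q c (i + 1)).natDegree = q ^ (i + 1) := by
  induction i with
  | zero => simp [zero_pow (by omega : q ≠ 0), natDegree_C_mul_X_pow _ _ hc]
  | succ i ih =>
    have hlt : (C (c (i + 1)) * X ^ q).natDegree <
        (frobeniusRecursion q c (i + 1) ^ q).natDegree := by
      rw [natDegree_pow, ih]
      calc (C (c (i + 1)) * X ^ q).natDegree ≤ q := natDegree_C_mul_X_pow_le _ _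
        _ < q * q ^ (i + 1) := lt_mul_right (by omega) (Nat.one_lt_pow (by omega) hq)
    rw [frobeniusRecursion_succ, natDegree_add_eq_left_of_natDegree_lt hlt, natDegree_pow, ih,
      pow_succ' q (i + 1)]

theorem exists_ne_zero_eval_frobeniusRecursion_eq_self [IsSepClosed K] (hq0 : (q : K) = 0)
    (hq : 1 < q) (hc : c 0 ≠ 0) {k : ℕ} (hk : k ≠ 0) :
    ∃ t ≠ 0, (frobeniusRecursion q c k).eval t = t := by
  obtain ⟨k, rfl⟩ := Nat.exists_eq_succ_of_ne_zero hk
  have hdeg : (frobeniusRecursion q c (k + 1) - X).natDegree = q ^ (k + 1) := by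
    rw [natDegree_sub_eq_left_of_natDegree_lt] <;> rw [natDegree_frobeniusRecursion hq hc]
    rw [natDegree_X]
    exact Nat.one_lt_pow (by omega) hq
  have hsep : (frobeniusRecursion q c (k + 1) - X).Separable := by
    rw [separable_def, derivative_sub, derivative_frobeniusRecursion hq0, derivative_X, zero_sub]
    exact isCoprime_one_right.neg_right
  obtain ⟨t, ht0, ht⟩ := IsSepClosed.exists_root_ne hsep
    (hdeg ▸ (Nat.one_lt_pow (by omega) hq : 1 < q ^ (k + 1))) 0
  exact ⟨t, ht0, sub_eq_zero.1 (by simpa using ht)⟩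

end Polynomial

theorem exists_linearIndependent_iterate_and_sum_smul_eq {K V : Type*} [DivisionRing K]
    [AddCommGroup V] [Module K V] [FiniteDimensional K V] (g : V → V) (v : V) :
    ∃ k, LinearIndependent K (fun i : Fin k => g^[i] v) ∧
      ∃ c : ℕ → K, ∑ i ∈ range k, c i • g^[i] v = g^[k] v := by
  classical
  have hex : ∃ n, ¬ LinearIndependent K (fun i : Fin n => g^[i] v) :=
    ⟨finrank K V + 1, fun h => by simpa using h.fintype_card_le_finrank⟩
  obtain ⟨k, hk⟩ : ∃ k, Nat.find hex = k + 1 :=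
    Nat.exists_eq_succ_of_ne_zero fun h0 => Nat.find_spec hex (h0 ▸ linearIndependent_empty_type)
  have hind : LinearIndependent K (fun i : Fin k => g^[i] v) :=
    not_not.1 (Nat.find_min hex (hk ▸ k.lt_succ_self))
  have hmem : g^[k] v ∈ span K (Set.range fun i : Fin k => g^[i] v) :=
    not_not.1 fun hmem => (hk ▸ Nat.find_spec hex) (linearIndependent_finSucc'.2 ⟨hind, hmem⟩)
  obtain ⟨c, hc⟩ := (mem_span_range_iff_exists_fun K).1 hmem
  refine ⟨k, hind, fun i => if h : i < k then c ⟨i, h⟩ else 0, ?_⟩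
  rw [← hc, ← Fin.sum_univ_eq_sum_range (fun i => (if h : i < k then c ⟨i, h⟩ else 0) • g^[i] v)]
  simp

theorem sum_range_smul_ne_zero {K V : Type*} [Ring K] [AddCommGroup V] [Module K V] {f : ℕ → V}
    {k : ℕ} (hf : LinearIndependent K (fun i : Fin k => f i)) {a : ℕ → K} {j : ℕ} (hj : j < k)
    (ha : a j ≠ 0) : ∑ i ∈ range k, a i • f i ≠ 0 := by
  rw [← Fin.sum_univ_eq_sum_range (fun i => a i • f i)]
  exact fun h => ha (Fintype.linearIndependent_iff.1 hf (fun i => a i) h ⟨j, hj⟩)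

section Semilinear

variable {E M : Type*} [Field E] [AddCommGroup M] [Module E M]
  {σ : E →+* E} {φ : M →ₛₗ[σ] M}

theorem LinearIndependent.map_of_span_range_eq_top [FiniteDimensional E M]
    (hspan : span E (Set.range φ) = ⊤) {ι : Type*} {w : ι → M} (hw : LinearIndependent E w) :
    LinearIndependent E (φ ∘ w) := by
  classical
  let b := Basis.extend hw.linearIndepOn_id
  have : Fintype (hw.linearIndepOn_id.extend (Set.subset_univ _)) := Fintype.ofFinite _
  have hb : LinearIndependent E (φ ∘ b) := by
    refine linearIndependent_of_top_le_span_of_card_eq_finrank ?_ (finrank_eq_card_basis b).symm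
    rw [← hspan, span_le]
    rintro _ ⟨x, rfl⟩
    rw [← b.sum_repr x, map_sum]
    exact sum_mem fun i _ => by
      rw [map_smulₛₗ]; exact smul_mem _ _ (subset_span ⟨i, rfl⟩)
  convert hb.comp (fun i => ⟨w i, Basis.subset_extend _ (Set.mem_range_self i)⟩)
    fun i j h => hw.injective (congrArg Subtype.val h)
  ext i
  simp [b, Basis.coe_extend]

theorem span_range_mapQ_eq_top (hspan : span E (Set.range φ) = ⊤) (W : Submodule E M)
    (hW : W ≤ W.comap φ) : span E (Set.range (W.mapQ W φ hW)) = ⊤ := by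
  rw [eq_top_iff, ← W.range_mkQ, LinearMap.range_eq_map, ← hspan, map_span, span_le]
  rintro _ ⟨_, ⟨x, rfl⟩, rfl⟩
  exact subset_span ⟨W.mkQ x, rfl⟩

end Semilinear

theorem exists_sub_pow_char_pow_eq {p : ℕ} [Fact p.Prime] {E : Type*} [Field E] [CharP E p]
    [IsSepClosed E] {f : ℕ} (hf : 0 < f) (a : E) : ∃ c, c - c ^ p ^ f = a := by
  obtain ⟨c, hc⟩ := IsSepClosed.exists_root_C_mul_X_pow_add_C_mul_X_add_C' p (p ^ f) (-1) 1 (-a)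
    (dvd_pow_self p hf.ne') (Nat.one_lt_pow hf.ne' (Fact.out : p.Prime).one_lt) one_ne_zero
  exact ⟨c, by linear_combination hc⟩

namespace FrobeniusSemilinear

variable {p f : ℕ} [Fact p.Prime] {E M : Type*} [Field E] [CharP E p] [AddCommGroup M]
  [Module E M] {φ : M →ₛₗ[iterateFrobenius E p f] M}

theorem apply_sum_frobeniusRecursion {v : M} {k : ℕ} {c : ℕ → E} {t : E}
    (hc : ∑ i ∈ range k, c i • φ^[i] v = φ^[k] v)
    (ht : (frobeniusRecursion (p ^ f) c k).eval t = t) :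
    φ (∑ i ∈ range k, (frobeniusRecursion (p ^ f) c (i + 1)).eval t • φ^[i] v) =
      ∑ i ∈ range k, (frobeniusRecursion (p ^ f) c (i + 1)).eval t • φ^[i] v := by
  set b : ℕ → E := fun i => (frobeniusRecursion (p ^ f) c i).eval t
  calc φ (∑ i ∈ range k, b (i + 1) • φ^[i] v)
      = ∑ i ∈ range (k + 1), b i ^ p ^ f • φ^[i] v := by
        simp [sum_range_succ', b, map_sum, map_smulₛₗ, iterateFrobenius_def, iterate_succ_apply',
          (Fact.out : p.Prime).ne_zero]
    _ = ∑ i ∈ range k, (b i ^ p ^ f + c i * t ^ p ^ f) • φ^[i] v := by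
        simp only [sum_range_succ, b, ht, ← hc, smul_sum, add_smul, sum_add_distrib, smul_smul,
          mul_comm]
    _ = ∑ i ∈ range k, b (i + 1) • φ^[i] v := by simp [b]

theorem coeff_zero_ne_zero_of_sum_smul_iterate_eq [FiniteDimensional E M]
    (hspan : span E (Set.range φ) = ⊤) {v : M} {k : ℕ}
    (hind : LinearIndependent E (fun i : Fin k => φ^[i] v)) (hk : k ≠ 0) {c : ℕ → E}
    (hc : ∑ i ∈ range k, c i • φ^[i] v = φ^[k] v) : c 0 ≠ 0 := by
  obtain ⟨k, rfl⟩ := Nat.exists_eq_succ_of_ne_zero hk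
  intro h0
  apply (linearIndependent_finSucc'.1 (hind.map_of_span_range_eq_top hspan)).2
  simp only [comp_apply, Fin.val_last, ← iterate_succ_apply' φ, ← hc, sum_range_succ', h0,
    zero_smul, add_zero]
  exact sum_mem fun i hi => smul_mem _ _
    (subset_span ⟨⟨i, mem_range.1 hi⟩, (iterate_succ_apply' φ i v).symm⟩)

theorem exists_ne_zero_apply_eq_self [IsSepClosed E] [FiniteDimensional E M] [Nontrivial M]
    (hf : 0 < f) (hspan : span E (Set.range φ) = ⊤) : ∃ m ≠ 0, φ m = m := by
  obtain ⟨v, hv⟩ := exists_ne (0 : M)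
  obtain ⟨k, hind, c, hc⟩ := exists_linearIndependent_iterate_and_sum_smul_eq (K := E) φ v
  have hk : k ≠ 0 := by
    rintro rfl
    exact hv (by simpa using hc.symm)
  have hp : 1 < p ^ f := Nat.one_lt_pow hf.ne' (Fact.out : p.Prime).one_lt
  obtain ⟨t, ht0, ht⟩ := exists_ne_zero_eval_frobeniusRecursion_eq_self
    ((CharP.cast_eq_zero_iff E p _).2 (dvd_pow_self p hf.ne')) hp
    (coeff_zero_ne_zero_of_sum_smul_iterate_eq hspan hind hk hc) hk
  refine ⟨_, sum_range_smul_ne_zero hind (Nat.sub_one_lt hk) ?_,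
    apply_sum_frobeniusRecursion hc ht⟩
  rwa [Nat.sub_one_add_one hk, ht]

theorem exists_sub_apply_eq_of_mem_span_fixedPoints [IsSepClosed E] (hf : 0 < f) {y : M}
    (hy : y ∈ span E (fixedPoints φ)) : ∃ z ∈ span E (fixedPoints φ), z - φ z = y := by
  -- `φ` does not commute with scalars, so all multiples of `y` are carried through the induction.
  suffices ∀ a : E, ∃ z ∈ span E (fixedPoints φ), z - φ z = a • y by simpa using this 1
  induction hy using span_induction with
  | mem x hx =>
    intro a
    obtain ⟨c, hc⟩ := exists_sub_pow_char_pow_eq hf a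
    refine ⟨c • x, smul_mem _ _ (subset_span hx), ?_⟩
    rw [map_smulₛₗ, hx.eq, iterateFrobenius_def, ← sub_smul, hc]
  | zero => exact fun _ => ⟨0, zero_mem _, by simp⟩
  | add x y _ _ hx hy =>
    intro a
    obtain ⟨z, hz, hzx⟩ := hx a
    obtain ⟨w, hw, hwy⟩ := hy a
    exact ⟨z + w, add_mem hz hw, by rw [map_add, smul_add, ← hzx, ← hwy]; abel⟩
  | smul b x _ hx =>
    intro a
    simpa [smul_smul] using hx (a * b)

theorem span_fixedPoints_eq_top [IsSepClosed E] [FiniteDimensional E M] (hf : 0 < f)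
    (hspan : span E (Set.range φ) = ⊤) : span E (fixedPoints φ) = ⊤ := by
  set N := span E (fixedPoints φ)
  have hN : N ≤ N.comap φ := span_le.2 fun m hm => by
    simpa [hm.eq] using subset_span hm
  by_contra hNtop
  have : Nontrivial (M ⧸ N) := Submodule.Quotient.nontrivial_iff.2 hNtop
  obtain ⟨y, hy0, hy⟩ := exists_ne_zero_apply_eq_self hf (span_range_mapQ_eq_top hspan N hN)
  obtain ⟨x, rfl⟩ := N.mkQ_surjective y
  obtain ⟨z, hzN, hz⟩ := exists_sub_apply_eq_of_mem_span_fixedPoints hf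
    ((Submodule.Quotient.eq N).1 hy)
  rw [sub_eq_sub_iff_add_eq_add] at hz
  have hxz : x + z ∈ N := subset_span (show φ (x + z) = x + z by rw [map_add, ← hz, add_comm])
  exact hy0 ((Submodule.Quotient.mk_eq_zero N).2 (by simpa using sub_mem hxz hzN))

end FrobeniusSemilinear

open FrobeniusSemilinear in
theorem frobenius_semilinear_descent_general
    {p : ℕ} [Fact p.Prime] (f : ℕ) (hf : 0 < f) (q : ℕ) (hq : q = p ^ f)
    (E : Type*) [Field E] [IsSepClosed E] [CharP E p]
    (M : Type*) [AddCommGroup M] [Module E M] [FiniteDimensional E M]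
    (φ : M →+ M) (hφ : ∀ (a : E) (m : M), φ (a • m) = a ^ q • φ m)
    (hspan : Submodule.span E (Set.range φ) = ⊤) :
    (∃ b : Module.Basis (Fin (Module.finrank E M)) E M, ∀ i, φ (b i) = b i) ∧
      Function.Surjective (fun m : M => m - φ m) := by
  subst hq
  let φₛ : M →ₛₗ[iterateFrobenius E p f] M := { φ with map_smul' := hφ }
  have hfix : span E (fixedPoints φₛ) = ⊤ := span_fixedPoints_eq_top hf hspan
  refine ⟨?_, fun m => ?_⟩
  · let b := Basis.ofSpan hfix.ge
    refine ⟨b.reindex (b.indexEquiv (finBasis E M)), fun i => ?_⟩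
    rw [Basis.reindex_apply]
    exact Basis.ofSpan_subset hfix.ge (Set.mem_range_self _)
  · obtain ⟨z, -, hz⟩ :=
      exists_sub_apply_eq_of_mem_span_fixedPoints hf (hfix.ge (mem_top (x := m)))
    exact ⟨z, hz⟩

/-- Let `E` be a separably closed field of characteristic `p` containing
`𝔽_q` with `q = p^f`, `M` a finite-dimensional `E`-vector space, and `φ : M → M` an additive
map with `φ(a·m) = a^q·φ(m)` whose image spans `M` over `E`. Then `M` has an `E`-basis of
`φ`-fixed vectors, and `m ↦ m − φ(m)` is surjective. -/
theorem frobenius_semilinear_descent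
    {p : ℕ} [Fact p.Prime] (f : ℕ) (hf : 0 < f) (q : ℕ) (hq : q = p ^ f)
    (E : Type*) [Field E] [IsSepClosed E] [CharP E p] [Algebra (GaloisField p f) E]
    (M : Type*) [AddCommGroup M] [Module E M] [FiniteDimensional E M]
    (φ : M →+ M) (hφ : ∀ (a : E) (m : M), φ (a • m) = a ^ q • φ m)
    (hspan : Submodule.span E (Set.range φ) = ⊤) :
    (∃ b : Module.Basis (Fin (Module.finrank E M)) E M, ∀ i, φ (b i) = b i) ∧
      Function.Surjective (fun m : M => m - φ m) :=
  frobenius_semilinear_descent_general f hf q hq E M φ hφ hspan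
end
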